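/- arXiv:2507.06124 — 7 statements merged into one kernel-verified Lean document; each statement's English description precedes it below -/
import Mathlib

section
/- Let V be a unit-closed variety of non-associative algebras over a field F, let B be a unital algebra in V, and let (p : A → U(B), s : U(B) → A) be a split epimorphism in V with p ∘ s = id. If the associated action of U(B) on ker p is coherent (i.e., there is a V-algebra morphism f : F ⋉ X → A restricting to the inclusion on X = ker p and satisfying f(α,0) = s(α·1_B)), then A is a unital algebra with unit s(1_B), and (p, s) is a split epimorphism of unital algebras. -/
/-- Let `V` be a unit-closed variety of non-associative algebras over a field `F`
(so algebras are `F`-vector spaces with a bilinear multiplication), let `B` be a unital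
algebra in `V` and `(p : A → B, s : B → A)` a split epimorphism in `V` (`p ∘ s = id`).
If the associated action of `B` on `X = ker p` is coherent, i.e. there is a `V`-algebra
morphism `f : F ⋉ X → A` (encoded as `f : F → A → A` on pairs `(α, x)` with `p x = 0`)
restricting to the inclusion on `X` and satisfying `f (α, 0) = s (α • 1_B)`, then `A` is a
unital algebra with unit `s 1_B` and `(p, s)` is a split epimorphism of unital algebras. -/
theorem stmt3 (F A B : Type*) [Field F]
    [NonUnitalNonAssocRing A] [Module F A] [SMulCommClass F A A] [IsScalarTower F A A]
    [NonUnitalNonAssocRing B] [Module F B] [SMulCommClass F B B] [IsScalarTower F B B]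
    [One B] (hB : ∀ b : B, 1 * b = b ∧ b * 1 = b)
    (p : A → B) (s : B → A)
    (hp_add : ∀ x y : A, p (x + y) = p x + p y)
    (hp_smul : ∀ (c : F) (x : A), p (c • x) = c • p x)
    (hp_mul : ∀ x y : A, p (x * y) = p x * p y)
    (hs_add : ∀ b b' : B, s (b + b') = s b + s b')
    (hs_smul : ∀ (c : F) (b : B), s (c • b) = c • s b)
    (hs_mul : ∀ b b' : B, s (b * b') = s b * s b')
    (hps : ∀ b : B, p (s b) = b)
    -- coherence: a morphism `f : F ⋉ (ker p) → A`
    (f : F → A → A)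
    (hf_add : ∀ (α α' : F) (x x' : A), p x = 0 → p x' = 0 →
      f (α + α') (x + x') = f α x + f α' x')
    (hf_smul : ∀ (c α : F) (x : A), p x = 0 → f (c * α) (c • x) = c • f α x)
    (hf_mul : ∀ (α α' : F) (x x' : A), p x = 0 → p x' = 0 →
      f (α * α') (x * x' + α • x' + α' • x) = f α x * f α' x')
    (hf_res : ∀ x : A, p x = 0 → f 0 x = x)
    (hf_unit : ∀ α : F, f α 0 = α • s 1) :
    (∀ a : A, s 1 * a = a ∧ a * s 1 = a) ∧ p (s 1) = 1 := by
  have hp0 : p 0 = 0 := by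
    have := hp_add 0 0
    simp only [add_zero] at this
    exact (left_eq_add.mp this)
  -- kernel elements absorb the unit
  have hleft : ∀ x : A, p x = 0 → s 1 * x = x := by
    intro x hx
    have h := hf_mul 1 0 0 x hp0 hx
    simp only [mul_zero, one_mul, zero_mul, smul_zero, zero_smul, add_zero, zero_add] at h
    rw [one_smul] at h
    rw [hf_res x hx, hf_unit 1, one_smul] at h
    exact h.symm
  have hright : ∀ x : A, p x = 0 → x * s 1 = x := by
    intro x hx
    have h := hf_mul 0 1 x 0 hx hp0
    simp only [mul_zero, zero_mul, one_mul, smul_zero, zero_smul, add_zero, zero_add] at h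
    rw [one_smul] at h
    rw [hf_res x hx, hf_unit 1, one_smul] at h
    exact h.symm
  have hker : ∀ a : A, p (a - s (p a)) = 0 := by
    intro a
    have hneg : ∀ y : A, p (-y) = - p y := by
      intro y
      have := hp_add y (-y)
      simp only [add_neg_cancel, hp0] at this
      exact eq_neg_of_add_eq_zero_right this.symm
    rw [sub_eq_add_neg, hp_add, hneg, hps, add_neg_cancel]
  refine ⟨fun a => ?_, hps 1⟩
  have hdecomp : a = (a - s (p a)) + s (p a) := by abel
  constructor
  · calc s 1 * a = s 1 * ((a - s (p a)) + s (p a)) := by rw [← hdecomp]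
    _ = s 1 * (a - s (p a)) + s 1 * s (p a) := by rw [mul_add]
    _ = (a - s (p a)) + s (p a) := by
        rw [hleft _ (hker a), ← hs_mul, (hB (p a)).1]
    _ = a := by abel
  · calc a * s 1 = ((a - s (p a)) + s (p a)) * s 1 := by rw [← hdecomp]
    _ = (a - s (p a)) * s 1 + s (p a) * s 1 := by rw [add_mul]
    _ = (a - s (p a)) + s (p a) := by
        rw [hright _ (hker a), ← hs_mul, (hB (p a)).2]
    _ = a := by abel
end

section
/- Let V be a unit-closed variety of non-associative algebras over a field F, B a unital algebra of V, and (p : A → B, s : B → A) a split epimorphism in V with kernel k : X → A. The associated action is coherent if and only if A is a unital algebra and s(1_B) = 1_A; in that case the unique linear map f : F ⋉ X → A determined by f(α,x) = s(α·1_B) + k(x) is an algebra morphism making the triple (id_X, f, ι) a morphism of split extensions. -/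
/-- Let `V` be a unit-closed variety of non-associative algebras over a field `F`, `B` a
unital algebra of `V`, and `(p : A → B, s : B → A)` a split epimorphism in `V` with kernel
`X = ker p` (included in `A`).  The associated action is coherent (i.e. there exists a
`V`-morphism `f : F ⋉ X → A` restricting to the kernel inclusion and to `α ↦ s (α • 1_B)`)
if and only if `A` is unital with unit `1_A = s 1_B`; in that case the unique linear map
determined by `f (α, x) = α • s 1_B + x` is an algebra morphism making
`(id_X, f, ι)` a morphism of split extensions. -/
theorem stmt4 (F A B : Type*) [Field F]
    [NonUnitalNonAssocRing A] [Module F A] [SMulCommClass F A A] [IsScalarTower F A A]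
    [NonUnitalNonAssocRing B] [Module F B] [SMulCommClass F B B] [IsScalarTower F B B]
    [One B] (hB : ∀ b : B, 1 * b = b ∧ b * 1 = b)
    (p : A → B) (s : B → A)
    (hp_add : ∀ x y : A, p (x + y) = p x + p y)
    (hp_smul : ∀ (c : F) (x : A), p (c • x) = c • p x)
    (hp_mul : ∀ x y : A, p (x * y) = p x * p y)
    (hs_add : ∀ b b' : B, s (b + b') = s b + s b')
    (hs_smul : ∀ (c : F) (b : B), s (c • b) = c • s b)
    (hs_mul : ∀ b b' : B, s (b * b') = s b * s b')
    (hps : ∀ b : B, p (s b) = b) :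
    -- coherence is equivalent to `A` being unital with unit `s 1_B`
    ((∃ f : F → A → A,
        (∀ (α α' : F) (x x' : A), p x = 0 → p x' = 0 →
          f (α + α') (x + x') = f α x + f α' x') ∧
        (∀ (c α : F) (x : A), p x = 0 → f (c * α) (c • x) = c • f α x) ∧
        (∀ (α α' : F) (x x' : A), p x = 0 → p x' = 0 →
          f (α * α') (x * x' + α • x' + α' • x) = f α x * f α' x') ∧
        (∀ x : A, p x = 0 → f 0 x = x) ∧
        (∀ α : F, f α 0 = α • s 1))
      ↔ (∃ e : A, (∀ a : A, e * a = a ∧ a * e = a) ∧ s 1 = e)) ∧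
    -- in that case `f (α, x) = α • s 1 + x` is an algebra morphism commuting with the
    -- split extension structure
    ((∃ e : A, (∀ a : A, e * a = a ∧ a * e = a) ∧ s 1 = e) →
      (∀ (α α' : F) (x x' : A), p x = 0 → p x' = 0 →
        (α * α') • s 1 + (x * x' + α • x' + α' • x) = (α • s 1 + x) * (α' • s 1 + x')) ∧
      (∀ (α : F) (x : A), p x = 0 → p (α • s 1 + x) = α • (1 : B)) ∧
      (∀ α : F, α • s 1 + 0 = s (α • 1))) := by

  have key : ∀ (α α' : F), (α • s 1 + (0:A)) * (α' • s 1 + (0:A)) = (α * α') • (s 1 * s 1) := by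
    intro α α'
    simp [smul_mul_smul_comm]
  constructor
  · constructor
    · rintro ⟨f, hadd, hsmul, hmul, hker, hs1⟩
      refine ⟨s 1, ?_, rfl⟩
      have hform : ∀ (α : F) (x : A), p x = 0 → f α x = α • s 1 + x := by
        intro α x hx
        have := hadd α 0 0 x (by simpa using hp_smul 0 (0:A)) hx
        simpa [hs1 α, hker x hx] using this
      have hker0 : p (0:A) = 0 := by simpa using hp_smul 0 (0:A)
      have hleft : ∀ x : A, p x = 0 → s 1 * x = x := by
        intro x hx
        have := hmul 1 0 0 x hker0 hx
        simp only [one_mul, mul_zero, zero_mul, one_smul, zero_smul, add_zero,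
          zero_add] at this
        rw [hker x hx, hs1] at this
        simpa using this.symm
      have hright : ∀ x : A, p x = 0 → x * s 1 = x := by
        intro x hx
        have := hmul 0 1 x 0 hx hker0
        simp only [one_mul, mul_zero, zero_mul, one_smul, zero_smul, add_zero,
          zero_add, mul_one] at this
        rw [hker x hx, hs1] at this
        simpa using this.symm
      intro a
      have hk : p (a - s (p a)) = 0 := by
        have : p (a + (-1 : F) • s (p a)) = 0 := by
          rw [hp_add, hp_smul, hps]
          simp
        simpa [sub_eq_add_neg] using this
      have hdecomp : a = (a - s (p a)) + s (p a) := by abel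
      have hsb : ∀ b : B, s 1 * s b = s b ∧ s b * s 1 = s b := by
        intro b
        constructor
        · rw [← hs_mul, (hB b).1]
        · rw [← hs_mul, (hB b).2]
      constructor
      · conv_lhs => rw [hdecomp]
        conv_rhs => rw [hdecomp]
        rw [mul_add, hleft _ hk, (hsb (p a)).1]
      · conv_lhs => rw [hdecomp]
        conv_rhs => rw [hdecomp]
        rw [add_mul, hright _ hk, (hsb (p a)).2]
    · rintro ⟨e, he, hse⟩
      refine ⟨fun α x => α • s 1 + x, ?_, ?_, ?_, ?_, ?_⟩
      · intro α α' x x' _ _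
        show (α + α') • s 1 + (x + x') = (α • s 1 + x) + (α' • s 1 + x')
        rw [add_smul]; abel
      · intro c α x _
        show (c * α) • s 1 + c • x = c • (α • s 1 + x)
        rw [smul_add, mul_smul]
      · intro α α' x x' hx hx'
        show (α * α') • s 1 + (x * x' + α • x' + α' • x) =
          (α • s 1 + x) * (α' • s 1 + x')
        rw [hse]
        have h1 : (α • e + x) * (α' • e + x') =
            (α * α') • (e * e) + (α • (e * x') + (α' • (x * e) + x * x')) := by
          rw [add_mul, mul_add, mul_add, smul_mul_smul_comm, smul_mul_assoc,
            mul_smul_comm]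
          abel
        rw [h1, (he e).1, (he x').1, (he x).2]
        abel
      · intro x _
        show (0:F) • s 1 + x = x
        simp
      · intro α
        show α • s 1 + 0 = α • s 1
        simp
  · rintro ⟨e, he, hse⟩
    refine ⟨?_, ?_, ?_⟩
    · intro α α' x x' _ _
      rw [hse]
      have h1 : (α • e + x) * (α' • e + x') =
          (α * α') • (e * e) + (α • (e * x') + (α' • (x * e) + x * x')) := by
        rw [add_mul, mul_add, mul_add, smul_mul_smul_comm, smul_mul_assoc,
          mul_smul_comm]
        abel
      rw [h1, (he e).1, (he x').1, (he x).2]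
      abel
    · intro α x hx
      rw [hp_add, hp_smul, hps, hx, add_zero]
    · intro α
      rw [hs_smul, add_zero]
end

section
/- Let A = UT₂(F) be the algebra of 2×2 upper triangular matrices over a field F and let B ⊆ A be the subalgebra of matrices with only the (1,1) entry possibly nonzero. Define p : A → B by p(⟨a,b;0,c⟩) = ⟨a,0;0,0⟩ and let s : B → A be the inclusion. Then (p,s) is a split epimorphism of associative algebras, but the unique linear map f : F ⋉ X → A (X = ker p) extending the inclusion of X and sending (1,0) to s(1_B) is not an algebra homomorphism; hence the associated action is not coherent. -/
/-- The projection `p : UT₂(F) → B`, `⟨a,b;0,c⟩ ↦ ⟨a,0;0,0⟩`, onto the subalgebra `B` of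
matrices concentrated in the `(1,1)` entry (extended to all of `Matrix (Fin 2) (Fin 2) F`). -/
def stmt6p (F : Type*) [Field F] (M : Matrix (Fin 2) (Fin 2) F) : Matrix (Fin 2) (Fin 2) F :=
  Matrix.of fun i j => if i = 0 ∧ j = 0 then M 0 0 else 0

/-- Let `A = UT₂(F)` (upper triangular `2 × 2` matrices, i.e. matrices `M` with `M 1 0 = 0`)
and `B ⊆ A` the subalgebra of matrices with only the `(1,1)` entry possibly nonzero.  Then
`p` (with the inclusion `s`) is a split epimorphism of associative algebras, but no linear
map `f : F ⋉ X → A` (`X = ker p`) extending the inclusion of `X` and sending `(1,0)` to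
`s 1_B = ⟨1,0;0,0⟩` is an algebra homomorphism; hence the associated action is not
coherent. -/
theorem stmt6 (F : Type*) [Field F] :
    -- `p` is multiplicative and additive on upper triangular matrices
    (∀ M N : Matrix (Fin 2) (Fin 2) F, M 1 0 = 0 → N 1 0 = 0 →
      stmt6p F (M * N) = stmt6p F M * stmt6p F N) ∧
    (∀ M N : Matrix (Fin 2) (Fin 2) F, stmt6p F (M + N) = stmt6p F M + stmt6p F N) ∧
    (∀ (c : F) (M : Matrix (Fin 2) (Fin 2) F), stmt6p F (c • M) = c • stmt6p F M) ∧
    -- `p ∘ s = id` on the subalgebra `B`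
    (∀ M : Matrix (Fin 2) (Fin 2) F, (∀ i j : Fin 2, ¬(i = 0 ∧ j = 0) → M i j = 0) →
      stmt6p F M = M) ∧
    -- the associated action is not coherent: no algebra morphism `f : F ⋉ X → A`
    -- restricts to the inclusion of `X = ker p` and sends `(1, 0)` to `s 1_B`
    ¬ ∃ f : F → Matrix (Fin 2) (Fin 2) F → Matrix (Fin 2) (Fin 2) F,
        (∀ (α β : F) (X Y : Matrix (Fin 2) (Fin 2) F),
          X 0 0 = 0 → X 1 0 = 0 → Y 0 0 = 0 → Y 1 0 = 0 →
          f (α + β) (X + Y) = f α X + f β Y) ∧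
        (∀ (c α : F) (X : Matrix (Fin 2) (Fin 2) F), X 0 0 = 0 → X 1 0 = 0 →
          f (c * α) (c • X) = c • f α X) ∧
        (∀ X : Matrix (Fin 2) (Fin 2) F, X 0 0 = 0 → X 1 0 = 0 → f 0 X = X) ∧
        (∀ α : F, f α 0 = α • !![1, 0; 0, 0]) ∧
        (∀ (α β : F) (X Y : Matrix (Fin 2) (Fin 2) F),
          X 0 0 = 0 → X 1 0 = 0 → Y 0 0 = 0 → Y 1 0 = 0 →
          f (α * β) (X * Y + α • Y + β • X) = f α X * f β Y) := by
  refine ⟨?_, ?_, ?_, ?_, ?_⟩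
  · intro M N hM hN
    ext i j
    simp only [stmt6p, Matrix.of_apply, Matrix.mul_apply, Fin.sum_univ_two, hM, hN]
    by_cases hi : i = 0 <;> by_cases hj : j = 0 <;>
      simp [hi, hj, hN, mul_comm]
  · intro M N
    ext i j
    simp only [stmt6p, Matrix.of_apply, Matrix.add_apply]
    split <;> simp
  · intro c M
    ext i j
    simp only [stmt6p, Matrix.of_apply, Matrix.smul_apply]
    split <;> simp
  · intro M hM
    ext i j
    simp only [stmt6p, Matrix.of_apply]
    by_cases h : i = 0 ∧ j = 0
    · simp [h.1, h.2]
    · simp [h, hM i j h]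
  · rintro ⟨f, -, -, h3, h4, h5⟩
    have key := h5 0 1 (!![0,1;0,0]) 0 (by simp) (by simp) (by simp) (by simp)
    rw [zero_mul, mul_zero, zero_smul, one_smul, zero_add, zero_add,
      h3 _ (by simp) (by simp), h4 1, one_smul] at key
    have : (!![0,1;0,0] : Matrix (Fin 2) (Fin 2) F) * !![1,0;0,0] = 0 := by
      ext i j; fin_cases i <;> fin_cases j <;>
        simp [Matrix.mul_apply, Fin.sum_univ_two]
    rw [this] at key
    have := congrFun (congrFun key 0) 1
    simp at this
end

section
/- Let A be a product algebra, B(A) = {x ∈ A : ¬¬x = x} the set of regular elements, and D(A) = {x ∈ A : ¬¬x = 1} the set of dense elements. Then B(A) is a Boolean subalgebra of A, D(A) is a filter of A, the map p : A → B(A), a ↦ ¬¬a, is a homomorphism, and together with the inclusion s : B(A) → A it forms a split extension with kernel D(A); moreover s(0) = 0, so the associated action is coherent. -/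
/-- A BL-algebra: a bounded (commutative, integral) residuated lattice satisfying
divisibility `x ⊓ y = x · (x → y)` and prelinearity `(x → y) ⊔ (y → x) = 1`. -/
class BLAlgebra (A : Type*) extends Lattice A, CommMonoid A where
  bot : A
  himp : A → A → A
  bot_le : ∀ x : A, bot ≤ x
  le_one : ∀ x : A, x ≤ 1
  residuation : ∀ x y z : A, x * y ≤ z ↔ x ≤ himp y z
  divisibility : ∀ x y : A, x ⊓ y = x * himp x y
  prelinearity : ∀ x y : A, himp x y ⊔ himp y x = 1

/-- A product algebra: a BL-algebra satisfying `¬x ⊔ ((x → x·y) → y) = 1`,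
where `¬x := x → 0`. -/
class ProductAlgebra (A : Type*) extends BLAlgebra A where
  prod_axiom : ∀ x y : A, himp x bot ⊔ himp (himp x (x * y)) y = 1

namespace ProductAlgebra

variable {A : Type*} [ProductAlgebra A]

/-- `¬x := x → 0`. -/
def neg (x : A) : A := BLAlgebra.himp x BLAlgebra.bot

end ProductAlgebra

open BLAlgebra ProductAlgebra

namespace PAux

variable {A : Type*} [ProductAlgebra A]

lemma res {x y z : A} : x * y ≤ z ↔ x ≤ himp y z := BLAlgebra.residuation x y z

lemma res' {x y z : A} : x * y ≤ z ↔ y ≤ himp x z := by rw [mul_comm]; exact res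

lemma neg_def (x : A) : neg x = himp x bot := rfl

lemma pa_le_one (x : A) : x ≤ 1 := BLAlgebra.le_one x
lemma pa_bot_le (x : A) : (bot : A) ≤ x := BLAlgebra.bot_le x

lemma mul_himp_le (x y : A) : x * himp x y ≤ y := res'.mpr le_rfl
lemma mul_himp_le' (x y : A) : himp x y * x ≤ y := by rw [mul_comm]; exact mul_himp_le x y

lemma mul_le_mul_right' {a b : A} (h : a ≤ b) (c : A) : a * c ≤ b * c :=
  res.mpr (h.trans (res.mp le_rfl))

lemma pa_mul_le_mul {a b c d : A} (h1 : a ≤ b) (h2 : c ≤ d) : a * c ≤ b * d :=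
  (mul_le_mul_right' h1 c).trans
    (by rw [mul_comm b c, mul_comm b d]; exact mul_le_mul_right' h2 b)

lemma pa_mul_le_left (x y : A) : x * y ≤ x := by
  have := pa_mul_le_mul (le_refl x) (pa_le_one y); rwa [mul_one] at this

lemma pa_mul_le_right (x y : A) : x * y ≤ y := by rw [mul_comm]; exact pa_mul_le_left y x

lemma le_iff_himp {x y : A} : x ≤ y ↔ himp x y = 1 := by
  constructor
  · intro h
    refine le_antisymm (pa_le_one _) ?_
    exact res.mp (by rwa [one_mul])
  · intro h
    have : (1 : A) * x ≤ y := res.mpr (by rw [h])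
    rwa [one_mul] at this

lemma himp_le_himp_right {y z : A} (h : y ≤ z) (x : A) : himp x y ≤ himp x z :=
  res.mp ((mul_himp_le' x y).trans h)

lemma himp_le_himp_left {x y : A} (h : x ≤ y) (z : A) : himp y z ≤ himp x z :=
  res.mp ((pa_mul_le_mul (le_refl (himp y z)) h).trans (mul_himp_le' y z))

lemma le_negneg (x : A) : x ≤ neg (neg x) := res.mp (mul_himp_le x bot)

lemma neg_le_neg {x y : A} (h : x ≤ y) : neg y ≤ neg x := himp_le_himp_left h bot

lemma negneg_mono {x y : A} (h : x ≤ y) : neg (neg x) ≤ neg (neg y) :=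
  neg_le_neg (neg_le_neg h)

lemma neg_negneg (x : A) : neg (neg (neg x)) = neg x :=
  le_antisymm (neg_le_neg (le_negneg x)) (le_negneg (neg x))

lemma pa_mul_bot (x : A) : x * (bot : A) = bot :=
  le_antisymm (pa_mul_le_right x bot) (pa_bot_le _)

lemma mul_neg_self (x : A) : x * neg x = bot :=
  le_antisymm (mul_himp_le x bot) (pa_bot_le _)

lemma pa_mul_sup (x y z : A) : x * (y ⊔ z) = x * y ⊔ x * z := by
  refine le_antisymm ?_ (sup_le (pa_mul_le_mul le_rfl le_sup_left)
    (pa_mul_le_mul le_rfl le_sup_right))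
  refine res'.mpr (sup_le (res'.mp le_sup_left) (res'.mp le_sup_right))

lemma neg_sup_negneg (x : A) : neg x ⊔ neg (neg x) = 1 := by
  have h := ProductAlgebra.prod_axiom x bot
  rwa [pa_mul_bot] at h

lemma inf_neg_self (x : A) : x ⊓ neg x = bot := by
  refine le_antisymm ?_ (pa_bot_le _)
  calc x ⊓ neg x = (x ⊓ neg x) * (neg x ⊔ neg (neg x)) := by rw [neg_sup_negneg, mul_one]
    _ = (x ⊓ neg x) * neg x ⊔ (x ⊓ neg x) * neg (neg x) := pa_mul_sup _ _ _
    _ ≤ x * neg x ⊔ neg x * neg (neg x) :=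
        sup_le_sup (mul_le_mul_right' inf_le_left _) (mul_le_mul_right' inf_le_right _)
    _ ≤ bot := by rw [mul_neg_self, mul_neg_self]; exact sup_le le_rfl le_rfl

lemma regular_mul_eq_inf {a : A} (h : neg (neg a) = a) (b : A) : a * b = a ⊓ b := by
  have hsup : a ⊔ neg a = 1 := by
    have := neg_sup_negneg a; rw [h] at this; rwa [sup_comm] at this
  refine le_antisymm (le_inf (pa_mul_le_left a b) (pa_mul_le_right a b)) ?_
  calc a ⊓ b = (a ⊓ b) * (a ⊔ neg a) := by rw [hsup, mul_one]
    _ = (a ⊓ b) * a ⊔ (a ⊓ b) * neg a := pa_mul_sup _ _ _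
    _ ≤ b * a ⊔ a * neg a :=
        sup_le_sup (mul_le_mul_right' inf_le_right _) (mul_le_mul_right' inf_le_left _)
    _ ≤ a * b := by rw [mul_neg_self, mul_comm b a]; exact sup_le le_rfl (pa_bot_le _)

lemma negneg_mul_le (x y : A) : neg (neg x) * neg (neg y) ≤ neg (neg (x * y)) := by
  have s1 : y * neg (x * y) ≤ neg x := by
    refine res.mp ?_
    have : y * neg (x * y) * x = x * y * neg (x * y) := by
      rw [mul_right_comm, mul_comm y x]
    rw [this]; exact mul_himp_le (x * y) bot
  have s2 : neg (neg x) ≤ neg (y * neg (x * y)) := neg_le_neg s1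
  have s3 : neg (neg x) * (y * neg (x * y)) ≤ bot := res.mpr s2
  have s4 : y ≤ neg (neg (neg x) * neg (x * y)) := by
    refine res'.mp ?_
    have : neg (neg x) * neg (x * y) * y = neg (neg x) * (y * neg (x * y)) := by
      rw [mul_right_comm, mul_assoc]
    rw [this]; exact s3
  have s5 : neg (neg y) ≤ neg (neg (neg x) * neg (x * y)) := by
    have := negneg_mono s4
    rwa [neg_negneg] at this
  have s6 : neg (neg y) * (neg (neg x) * neg (x * y)) ≤ bot := res.mpr s5
  refine res.mp ?_
  have : neg (neg x) * neg (neg y) * neg (x * y) =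
      neg (neg y) * (neg (neg x) * neg (x * y)) := by
    rw [← mul_assoc, mul_comm (neg (neg x)) (neg (neg y))]
  rw [this]; exact s6

lemma negneg_regular (x : A) : neg (neg (neg (neg x))) = neg (neg x) := neg_negneg (neg x)

lemma negneg_mul (x y : A) : neg (neg (x * y)) = neg (neg x) * neg (neg y) := by
  refine le_antisymm ?_ (negneg_mul_le x y)
  have h : neg (neg (x * y)) ≤ neg (neg x) ⊓ neg (neg y) :=
    le_inf (negneg_mono (pa_mul_le_left x y)) (negneg_mono (pa_mul_le_right x y))
  rwa [← regular_mul_eq_inf (negneg_regular x) (neg (neg y))] at h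

lemma sup_himp (x y z : A) : himp (x ⊔ y) z = himp x z ⊓ himp y z := by
  refine le_antisymm (le_inf (himp_le_himp_left le_sup_left z)
    (himp_le_himp_left le_sup_right z)) (res.mp ?_)
  rw [pa_mul_sup]
  exact sup_le ((mul_le_mul_right' inf_le_left x).trans (mul_himp_le' x z))
    ((mul_le_mul_right' inf_le_right y).trans (mul_himp_le' y z))

lemma inf_himp (x y z : A) : himp (x ⊓ y) z = himp x z ⊔ himp y z := by
  refine le_antisymm ?_ (sup_le (himp_le_himp_left inf_le_left z)
    (himp_le_himp_left inf_le_right z))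
  have h1 : himp (x ⊓ y) z * himp x y ≤ himp x z := by
    refine res.mp ?_
    have e : himp (x ⊓ y) z * himp x y * x = (x ⊓ y) * himp (x ⊓ y) z := by
      calc himp (x ⊓ y) z * himp x y * x
          = himp (x ⊓ y) z * (x * himp x y) := by rw [mul_assoc, mul_comm (himp x y) x]
        _ = himp (x ⊓ y) z * (x ⊓ y) := by rw [← BLAlgebra.divisibility]
        _ = (x ⊓ y) * himp (x ⊓ y) z := mul_comm _ _
    rw [e]; exact mul_himp_le _ _
  have h2 : himp (x ⊓ y) z * himp y x ≤ himp y z := by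
    refine res.mp ?_
    have e : himp (x ⊓ y) z * himp y x * y = (x ⊓ y) * himp (x ⊓ y) z := by
      calc himp (x ⊓ y) z * himp y x * y
          = himp (x ⊓ y) z * (y * himp y x) := by rw [mul_assoc, mul_comm (himp y x) y]
        _ = himp (x ⊓ y) z * (y ⊓ x) := by rw [← BLAlgebra.divisibility]
        _ = (x ⊓ y) * himp (x ⊓ y) z := by rw [inf_comm y x, mul_comm]
    rw [e]; exact mul_himp_le _ _
  calc himp (x ⊓ y) z = himp (x ⊓ y) z * (himp x y ⊔ himp y x) := by
        rw [BLAlgebra.prelinearity, mul_one]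
    _ = himp (x ⊓ y) z * himp x y ⊔ himp (x ⊓ y) z * himp y x := pa_mul_sup _ _ _
    _ ≤ himp x z ⊔ himp y z := sup_le_sup h1 h2

lemma neg_inf (x y : A) : neg (x ⊓ y) = neg x ⊔ neg y := inf_himp x y bot

lemma neg_sup (x y : A) : neg (x ⊔ y) = neg x ⊓ neg y := sup_himp x y bot

lemma negneg_sup (x y : A) : neg (neg (x ⊔ y)) = neg (neg x) ⊔ neg (neg y) := by
  rw [neg_sup x y, neg_inf]

lemma negneg_inf (x y : A) : neg (neg (x ⊓ y)) = neg (neg x) ⊓ neg (neg y) := by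
  rw [neg_inf x y, neg_sup]

lemma negneg_himp (x y : A) : neg (neg (himp x y)) = himp (neg (neg x)) (neg (neg y)) := by
  refine le_antisymm (res.mp ?_) ?_
  · exact (negneg_mul_le (himp x y) x).trans
      (negneg_mono ((mul_comm (himp x y) x) ▸ mul_himp_le x y))
  · have hx : neg x ≤ himp x y := res.mp (by
      rw [mul_comm]; exact (mul_neg_self x).le.trans (pa_bot_le y))
    have hy : y ≤ himp x y := res.mp (pa_mul_le_left y x)
    have h1 : neg (himp x y) ≤ neg (neg x) := neg_le_neg hx
    have h2 : neg (himp x y) ≤ neg (neg (neg y)) := by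
      rw [neg_negneg]; exact neg_le_neg hy
    refine res.mp (le_trans ?_ (inf_neg_self (neg (neg y))).le)
    refine le_inf ?_ ?_
    · exact (pa_mul_le_mul le_rfl h1).trans (mul_himp_le' _ _)
    · exact (pa_mul_le_right _ _).trans h2

lemma neg_one : neg (1 : A) = bot := by
  refine le_antisymm ?_ (pa_bot_le _)
  have := mul_himp_le (1 : A) bot; rwa [one_mul] at this

lemma neg_bot : neg (bot : A) = 1 := le_iff_himp.mp (le_refl (bot : A))

lemma negneg_one : neg (neg (1 : A)) = 1 := by rw [neg_one, neg_bot]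

lemma negneg_bot : neg (neg (bot : A)) = bot := by rw [neg_bot, neg_one]

end PAux

/-- Let `A` be a product algebra, `B(A) = {x : ¬¬x = x}` the set of regular elements and
`D(A) = {x : ¬¬x = 1}` the set of dense elements.  Then `B(A)` is a Boolean subalgebra of
`A`, `D(A)` is a filter, `p : a ↦ ¬¬a` is a homomorphism onto `B(A)` which together with
the inclusion `s` forms a split extension with kernel `D(A)`; moreover `s 0 = 0`, so the
associated action is coherent (`0 = s 0` is the bottom element). -/
theorem stmt15 (A : Type*) [ProductAlgebra A] :
    -- `B(A)` is a subalgebra containing `0` and `1`, closed under `·`, `→`, `⊔`, `⊓` ...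
    (neg (neg (1 : A)) = 1) ∧
    (neg (neg (bot : A)) = bot) ∧
    (∀ x y : A, neg (neg x) = x → neg (neg y) = y → neg (neg (x * y)) = x * y) ∧
    (∀ x y : A, neg (neg x) = x → neg (neg y) = y → neg (neg (himp x y)) = himp x y) ∧
    (∀ x y : A, neg (neg x) = x → neg (neg y) = y → neg (neg (x ⊔ y)) = x ⊔ y) ∧
    (∀ x y : A, neg (neg x) = x → neg (neg y) = y → neg (neg (x ⊓ y)) = x ⊓ y) ∧
    -- ... which is Boolean: each regular element is complemented by its negation
    (∀ x : A, neg (neg x) = x → x ⊔ neg x = 1 ∧ x ⊓ neg x = bot) ∧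
    -- `D(A)` is a filter: contains `1`, closed under `·`, upward closed
    (neg (neg (1 : A)) = 1) ∧
    (∀ x y : A, neg (neg x) = 1 → neg (neg y) = 1 → neg (neg (x * y)) = 1) ∧
    (∀ x y : A, neg (neg x) = 1 → x ≤ y → neg (neg y) = 1) ∧
    -- `p : a ↦ ¬¬a` is a homomorphism with values in `B(A)`, fixing `B(A)` (so `p ∘ s = id`)
    (∀ x y : A, neg (neg (x * y)) = neg (neg x) * neg (neg y)) ∧
    (∀ x y : A, neg (neg (himp x y)) = himp (neg (neg x)) (neg (neg y))) ∧
    (neg (neg (bot : A)) = bot) ∧ (neg (neg (1 : A)) = 1) ∧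
    (∀ x : A, neg (neg (neg (neg x))) = neg (neg x)) ∧
    -- the kernel of `p` (preimage of `1`) is `D(A)`
    (∀ x : A, neg (neg x) = 1 ↔ neg (neg x) = 1) ∧
    -- `s 0 = 0` and the associated action is coherent: `0` is the bottom element
    (∀ a : A, himp bot a = 1) := by
  open PAux in
  refine ⟨negneg_one, negneg_bot, ?_, ?_, ?_, ?_, ?_, negneg_one, ?_, ?_, ?_, ?_,
    negneg_bot, negneg_one, negneg_regular, fun x => Iff.rfl, fun a => le_iff_himp.mp (pa_bot_le a)⟩
  · intro x y hx hy; rw [negneg_mul, hx, hy]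
  · intro x y hx hy; rw [negneg_himp, hx, hy]
  · intro x y hx hy; rw [negneg_sup, hx, hy]
  · intro x y hx hy; rw [negneg_inf, hx, hy]
  · intro x hx
    constructor
    · have := neg_sup_negneg x; rw [hx] at this; rwa [sup_comm] at this
    · exact inf_neg_self x
  · intro x y hx hy; rw [negneg_mul, hx, hy, one_mul]
  · intro x y hx hxy
    exact le_antisymm (pa_le_one _) (hx ▸ negneg_mono hxy)
  · exact negneg_mul
  · exact negneg_himp
end

section
/- In the category of pointed sets, let (1+B, 1) be the pointed set obtained by freely adding a basepoint to a set B, and let (p : (1+B,1) → (A,*_A), s : (A,*_A) → (1+B,1)) be a split monomorphism-retraction pair (s ∘ p = id) of pointed maps. Suppose there is a pointed map f : (A,*_A) → (1+X,1) (where X is the cokernel of p, with quotient map k : A → X) such that f ∘ p = (1 + !_B) composed with the unit inclusion, [*_X, id_X] ∘ f = k, and (1+!_X) ∘ f = (1+!_B) ∘ s. Then s⁻¹(1) = {*_A}; that is, s(a) = 1 implies a = p(1) = *_A. -/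
/-- In pointed sets, let `(1+B, 1)` (modelled as `Option B` pointed at `none`) and a split
mono-retraction pair `p : (1+B,1) → (A,*_A)`, `s : (A,*_A) → (1+B,1)` with `s ∘ p = id`.
Let `k : A → X` be the cokernel of `p` (quotient collapsing the image of `p` to the
basepoint `*_X`).  Suppose there is a pointed map `f : (A,*_A) → (1+X,1)` such that
`f ∘ p = (1+*_X) ∘ (1+!_B)`, `[*_X, id_X] ∘ f = k` and `(1+!_X) ∘ f = (1+!_B) ∘ s`.
Then `s⁻¹(1) = {*_A}`: `s a = 1` implies `a = p 1 = *_A`. -/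
theorem stmt17 (B A X : Type*) (starA : A) (starX : X)
    (p : Option B → A) (s : A → Option B) (k : A → X)
    -- pointedness and the splitting
    (hp : p none = starA) (hs0 : s starA = none) (hsp : ∀ o : Option B, s (p o) = o)
    -- `k` is the cokernel of `p`
    (hk0 : ∀ o : Option B, k (p o) = starX)
    (hk_eq : ∀ a a' : A, k a = k a' → a = a' ∨ ((∃ o, p o = a) ∧ (∃ o, p o = a')))
    (hk_surj : Function.Surjective k)
    -- coherence data
    (f : A → Option X)
    (hf1 : ∀ b : B, f (p (some b)) = some starX)
    (hf1' : f (p none) = none)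
    (hf2 : ∀ a : A, (f a).elim starX id = k a)
    (hf3 : ∀ a : A, f a = none ↔ s a = none) :
    ∀ a : A, s a = none ↔ a = starA := by
  intro a
  constructor
  · intro hsa
    have hfa : f a = none := (hf3 a).mpr hsa
    have hka : k a = starX := by rw [← hf2 a, hfa]; rfl
    have : k a = k starA := by rw [hka, ← hp, hk0]
    rcases hk_eq a starA this with h | ⟨⟨o, ho⟩, _⟩
    · exact h
    · have : s a = o := by rw [← ho, hsp]
      rw [hsa] at this
      rw [← ho, ← this, hp]
  · rintro rfl; exact hs0
end

section
/- In the category of pointed sets, a split mono-retraction pair (p : (1+B,1) → (A,*_A), s : (A,*_A) → (1+B,1)) with s ∘ p = id corresponds to a coherent action (in the ideally exact context Set^op over (Set_*)^op) if and only if s⁻¹(1) = {*_A}. In that case, setting A' = A \ {*_A}, the restrictions p' = p|_B : B → A' and s' = s|_{A'} : A' → B form a split mono-retraction pair of plain sets, and A ≅ 1 + A' as pointed sets compatibly with (p,s). -/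
/-!
The retraction `s` already sends the base point to `1` (since `s ∘ p = id`), so coherence can
only fail through points `a ≠ *_A` with `s a = 1`. A coherent map `f` forces `k a = *_X` at such
points, and since `k` identifies only points of the image of `p`, `a = p o`; then
`o = s (p o) = 1`, i.e. `a = *_A`. Conversely, if `s⁻¹(1) = {*_A}`, the map `a ↦ k a`, sent to
`1` exactly where `s` is, is coherent. Once the fibre is a single point, `A` is `1 + (A \ {*_A})`
and `p`, `s` restrict to `B` and `A \ {*_A}`.
-/

/-- The diagram of split extensions in `Set_*` commutes when the pointed map
`f : (A, *_A) → (1 + X, 1)` is inserted; `X` is the cokernel of `p` with quotient map `k`. -/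
def IsCoherenceMap {A B X : Type*} (p : Option B → A) (s : A → Option B) (k : A → X)
    (starX : X) (f : A → Option X) : Prop :=
  (∀ b : B, f (p (some b)) = some starX) ∧
    (f (p none) = none) ∧
    (∀ a : A, (f a).elim starX id = k a) ∧
    (∀ a : A, f a = none ↔ s a = none)

section SplitPair

variable {A B X : Type*} {p : Option B → A} {s : A → Option B}

theorem eq_base_of_mem_range_of_eq_none (hsp : ∀ o, s (p o) = o) {o : Option B} {a : A}
    (ho : p o = a) (ha : s a = none) : a = p none := by
  rw [← ho, ← ha, ← ho, hsp]

theorem apply_some_ne_base (hsp : ∀ o, s (p o) = o) (b : B) : p (some b) ≠ p none :=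
  fun h => Option.some_ne_none b (by rw [← hsp (some b), h, hsp])

theorem eq_base_of_eq_none_of_isCoherenceMap {k : A → X} {starX : X}
    (hsp : ∀ o, s (p o) = o) (hk0 : ∀ o, k (p o) = starX)
    (hk_eq : ∀ a a' : A, k a = k a' → a = a' ∨ ((∃ o, p o = a) ∧ (∃ o, p o = a')))
    {f : A → Option X} (hf : IsCoherenceMap p s k starX f) {a : A} (ha : s a = none) :
    a = p none := by
  obtain ⟨-, -, hfk, hf_none⟩ := hf
  have hka : k a = k (p none) := by
    rw [← hfk a, (hf_none a).2 ha, hk0]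
    rfl
  obtain h | ⟨⟨o, ho⟩, -⟩ := hk_eq a (p none) hka
  · exact h
  · exact eq_base_of_mem_range_of_eq_none hsp ho ha

theorem isCoherenceMap_of_eq_none_iff {k : A → X} {starX : X}
    (hsp : ∀ o, s (p o) = o) (hk0 : ∀ o, k (p o) = starX)
    (hA : ∀ a, s a = none ↔ a = p none) :
    IsCoherenceMap p s k starX fun a => (s a).map fun _ => k a := by
  refine ⟨fun b => by simp [hsp, hk0], by simp [hsp], fun a => ?_, fun a => Option.map_eq_none_iff⟩
  cases h : s a with
  | none => rw [(hA a).1 h]; simp [hsp, hk0]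
  | some => simp [h]

theorem exists_restrict_of_eq_none_iff (hsp : ∀ o, s (p o) = o)
    (hA : ∀ a, s a = none ↔ a = p none) :
    ∃ (p' : B → {a : A // a ≠ p none}) (s' : {a : A // a ≠ p none} → B),
      (∀ b, (p' b : A) = p (some b)) ∧
      (∀ a : {a : A // a ≠ p none}, s a = some (s' a)) ∧
      (∀ b, s' (p' b) = b) := by
  have hs_isSome (a : {a : A // a ≠ p none}) : (s a).isSome :=
    Option.isSome_iff_ne_none.2 (mt (hA a).1 a.2)
  refine ⟨fun b => ⟨p (some b), apply_some_ne_base hsp b⟩, fun a => (s a).get (hs_isSome a),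
    fun _ => rfl, fun a => (Option.some_get _).symm, fun b => ?_⟩
  simp only [hsp, Option.get_some]

end SplitPair

theorem stmt18_general (B A X : Type*) (starA : A) (starX : X)
    (p : Option B → A) (s : A → Option B) (k : A → X)
    (hp : p none = starA) (hsp : ∀ o : Option B, s (p o) = o)
    (hk0 : ∀ o : Option B, k (p o) = starX)
    (hk_eq : ∀ a a' : A, k a = k a' → a = a' ∨ ((∃ o, p o = a) ∧ (∃ o, p o = a'))) :
    -- coherence ↔ `s⁻¹(1) = {*_A}`
    ((∃ f : A → Option X,
        (∀ b : B, f (p (some b)) = some starX) ∧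
        (f (p none) = none) ∧
        (∀ a : A, (f a).elim starX id = k a) ∧
        (∀ a : A, f a = none ↔ s a = none))
      ↔ (∀ a : A, s a = none ↔ a = starA)) ∧
    -- in that case, `(p, s)` restricts to a split pair of plain sets and `A ≅ 1 + A'`
    ((∀ a : A, s a = none ↔ a = starA) →
      ∃ (p' : B → {a : A // a ≠ starA}) (s' : {a : A // a ≠ starA} → B),
        (∀ b : B, (p' b : A) = p (some b)) ∧
        (∀ a : {a : A // a ≠ starA}, s (a : A) = some (s' a)) ∧
        (∀ b : B, s' (p' b) = b) ∧
        ∃ σ : A ≃ Option {a : A // a ≠ starA},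
          σ starA = none ∧ ∀ a : {a : A // a ≠ starA}, σ (a : A) = some a) := by
  classical
  subst hp
  refine ⟨⟨fun ⟨f, hf⟩ a => ⟨eq_base_of_eq_none_of_isCoherenceMap hsp hk0 hk_eq hf, ?_⟩,
    fun hA => ⟨fun a => (s a).map fun _ => k a, isCoherenceMap_of_eq_none_iff hsp hk0 hA⟩⟩, fun hA => ?_⟩
  · rintro rfl
    exact hsp none
  · obtain ⟨p', s', hp', hs', hsp'⟩ := exists_restrict_of_eq_none_iff hsp hA
    exact ⟨p', s', hp', hs', hsp', (Equiv.optionSubtypeNe (p none)).symm,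
      Equiv.optionSubtypeNe_symm_self _, fun a => Equiv.optionSubtypeNe_symm_of_ne a.2⟩

/-- In pointed sets, a split mono-retraction pair `p : (1+B,1) → (A,*_A)`,
`s : (A,*_A) → (1+B,1)` with `s ∘ p = id` corresponds to a coherent action (in the ideally
exact context `Set^op` over `(Set_*)^op`) if and only if `s⁻¹(1) = {*_A}`.  In that case,
setting `A' = A \ {*_A}`, the restrictions `p' = p|_B : B → A'` and `s' = s|_{A'} : A' → B`
form a split mono-retraction pair of plain sets, and `A ≅ 1 + A'` as pointed sets
compatibly with `(p, s)`. -/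
theorem stmt18 (B A X : Type*) (starA : A) (starX : X)
    (p : Option B → A) (s : A → Option B) (k : A → X)
    (hp : p none = starA) (hs0 : s starA = none) (hsp : ∀ o : Option B, s (p o) = o)
    (hk0 : ∀ o : Option B, k (p o) = starX)
    (hk_eq : ∀ a a' : A, k a = k a' → a = a' ∨ ((∃ o, p o = a) ∧ (∃ o, p o = a')))
    (hk_surj : Function.Surjective k) :
    -- coherence ↔ `s⁻¹(1) = {*_A}`
    ((∃ f : A → Option X,
        (∀ b : B, f (p (some b)) = some starX) ∧
        (f (p none) = none) ∧
        (∀ a : A, (f a).elim starX id = k a) ∧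
        (∀ a : A, f a = none ↔ s a = none))
      ↔ (∀ a : A, s a = none ↔ a = starA)) ∧
    -- in that case, `(p, s)` restricts to a split pair of plain sets and `A ≅ 1 + A'`
    ((∀ a : A, s a = none ↔ a = starA) →
      ∃ (p' : B → {a : A // a ≠ starA}) (s' : {a : A // a ≠ starA} → B),
        (∀ b : B, (p' b : A) = p (some b)) ∧
        (∀ a : {a : A // a ≠ starA}, s (a : A) = some (s' a)) ∧
        (∀ b : B, s' (p' b) = b) ∧
        ∃ σ : A ≃ Option {a : A // a ≠ starA},
          σ starA = none ∧ ∀ a : {a : A // a ≠ starA}, σ (a : A) = some a) :=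
  stmt18_general B A X starA starX p s k hp hsp hk0 hk_eq
end

section
/- Consider the pointed sets (A,*) with A = {a, *} (two elements) and (B,*) with B = {*}. Let p : B → A be the inclusion and s : A → B the unique retraction (s(a) = s(*) = *). Then the action associated to the split pair (p,s) in the ideally exact context Set^op over (Set_*)^op is not coherent: s⁻¹(*) = A ≠ {*}, equivalently there is no function from {*} to the empty set realizing the required restriction. -/
/-- Consider the pointed sets `(A,*)` with `A = {a, *}` (modelled as `Bool`, pointed at
`false`) and `(B,*)` with `B = {*}` (so `B` is empty as a plain set and `1+B ≅ Option Empty`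
has only the basepoint `none`).  Let `p : Option Empty → Bool` be the inclusion and
`s : Bool → Option Empty` the unique retraction (`s _ = none`).  Then `s ∘ p = id`, but the
associated action is not coherent: `s⁻¹(*) = A ≠ {*}`, equivalently there is no function
from a one-point set to the empty set realizing the required restriction. -/
theorem stmt19 :
    -- `(p, s)` is a split mono-retraction pair of pointed sets
    (∀ o : Option Empty,
      (fun _ : Bool => (none : Option Empty)) ((fun o : Option Empty => o.elim false Empty.elim) o) = o) ∧
    ((fun o : Option Empty => o.elim false Empty.elim) none = false) ∧
    -- not coherent: `s⁻¹(1) ≠ {*_A}`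
    ¬ (∀ a : Bool, (fun _ : Bool => (none : Option Empty)) a = none ↔ a = false) ∧
    {a : Bool | (fun _ : Bool => (none : Option Empty)) a = none} ≠ ({false} : Set Bool) ∧
    -- equivalently, there is no map from the one-point set to the empty set
    ¬ Nonempty (PUnit → Empty) := by
  refine ⟨fun o => by cases o with | none => rfl | some e => exact e.elim, rfl, ?_, ?_, ?_⟩
  · intro h
    have := (h true).mp rfl
    simp at this
  · intro h
    have : true ∈ ({false} : Set Bool) := h ▸ rfl
    simp at this
  · rintro ⟨f⟩
    exact (f PUnit.unit).elim
end
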